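/- arXiv:2401.15225 — 4 statements merged into one kernel-verified Lean document; each statement's English description precedes it below -/
import Mathlib

section
/- If (X,Y) ~ BVE(λ₁,λ₂,λ₃), then E(XY) = (1/(λ₁+λ₂+λ₃))·(1/(λ₁+λ₃) + 1/(λ₂+λ₃)). -/
open MeasureTheory Real Set

lemma exp_tail {b : ℝ} (hb : 0 < b) (a : ℝ) :
    ∫ y in Set.Ioi a, exp (-(b*y)) = exp (-(b*a))/b := by
  have := integral_comp_mul_left_Ioi (fun x => exp (-x)) a hb
  simp only [integral_exp_neg_Ioi, smul_eq_mul] at this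
  rw [this]
  field_simp

lemma exp_tail_lint {b : ℝ} (hb : 0 < b) (a : ℝ) :
    ∫⁻ y in Set.Ioi a, ENNReal.ofReal (exp (-(b*y))) = ENNReal.ofReal (exp (-(b*a))/b) := by
  rw [← ofReal_integral_eq_lintegral_ofReal, exp_tail hb a]
  · have h := exp_neg_integrableOn_Ioi a hb
    simp only [neg_mul] at h; exact h
  · exact Filter.Eventually.of_forall fun y => (exp_pos _).le

lemma exp_Ioc_int {b : ℝ} (hb : 0 < b) {x : ℝ} (hx : 0 ≤ x) :
    ∫ y in Set.Ioc 0 x, exp (-(b*y)) = (1 - exp (-(b*x)))/b := by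
  rw [← intervalIntegral.integral_of_le hx]
  have key : ∀ y ∈ Set.uIcc 0 x, HasDerivAt (fun t => -exp (-(b*t))/b) (exp (-(b*y))) y := by
    intro y _
    have h1 : HasDerivAt (fun t : ℝ => -(b*t)) (-b) y := by
      simpa using ((hasDerivAt_id y).const_mul (-b))
    have h2 := (h1.exp).neg.div_const b
    refine h2.congr_deriv ?_
    rw [div_eq_iff hb.ne']; ring
  rw [intervalIntegral.integral_eq_sub_of_hasDerivAt key]
  · field_simp
    simp only [mul_zero, neg_zero, exp_zero]; ring
  · exact (Continuous.intervalIntegrable (by continuity) 0 x)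

lemma exp_Ioc_lint {b : ℝ} (hb : 0 < b) {x : ℝ} (hx : 0 ≤ x) :
    ∫⁻ y in Set.Ioc 0 x, ENNReal.ofReal (exp (-(b*y))) = ENNReal.ofReal ((1 - exp (-(b*x)))/b) := by
  rw [← ofReal_integral_eq_lintegral_ofReal, exp_Ioc_int hb hx]
  · exact (Continuous.integrableOn_Ioc (by continuity))
  · exact Filter.Eventually.of_forall fun y => (exp_pos _).le

lemma inner_int {l1 l2 l3 : ℝ} (hl1 : 0 < l1) (hl2 : 0 < l2) (hl3 : 0 ≤ l3) {x : ℝ} (hx : 0 < x) :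
    ∫⁻ y in Set.Ioi 0, ENNReal.ofReal (exp (-l1 * x - l2 * y - l3 * max x y)) =
      ENNReal.ofReal ((1/l2) * exp (-((l1+l3) * x))
        + (1/(l2+l3) - 1/l2) * exp (-((l1+l2+l3) * x))) := by
  have hB : 0 < l2 + l3 := by linarith
  rw [← Ioc_union_Ioi_eq_Ioi hx.le,
    lintegral_union measurableSet_Ioi (Ioc_disjoint_Ioi le_rfl)]
  have h1 : ∫⁻ y in Set.Ioc 0 x, ENNReal.ofReal (exp (-l1 * x - l2 * y - l3 * max x y)) =
      ENNReal.ofReal (exp (-((l1+l3)*x))) * ENNReal.ofReal ((1 - exp (-(l2*x)))/l2) := by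
    have step : ∫⁻ y in Set.Ioc 0 x, ENNReal.ofReal (exp (-l1 * x - l2 * y - l3 * max x y)) =
        ∫⁻ y in Set.Ioc 0 x, ENNReal.ofReal (exp (-((l1+l3)*x))) * ENNReal.ofReal (exp (-(l2*y))) :=
      setLIntegral_congr_fun measurableSet_Ioc (fun y hy => by
        rw [max_eq_left hy.2, show -l1 * x - l2 * y - l3 * x = -((l1+l3)*x) + -(l2*y) by ring,
          exp_add, ENNReal.ofReal_mul (exp_pos _).le])
    rw [step, lintegral_const_mul' _ _ ENNReal.ofReal_ne_top, exp_Ioc_lint hl2 hx.le]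
  have h2 : ∫⁻ y in Set.Ioi x, ENNReal.ofReal (exp (-l1 * x - l2 * y - l3 * max x y)) =
      ENNReal.ofReal (exp (-(l1*x))) * ENNReal.ofReal (exp (-((l2+l3)*x))/(l2+l3)) := by
    have step : ∫⁻ y in Set.Ioi x, ENNReal.ofReal (exp (-l1 * x - l2 * y - l3 * max x y)) =
        ∫⁻ y in Set.Ioi x, ENNReal.ofReal (exp (-(l1*x))) * ENNReal.ofReal (exp (-((l2+l3)*y))) :=
      setLIntegral_congr_fun measurableSet_Ioi (fun y hy => by
        rw [max_eq_right (le_of_lt hy), show -l1 * x - l2 * y - l3 * y = -(l1*x) + -((l2+l3)*y) by ring,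
          exp_add, ENNReal.ofReal_mul (exp_pos _).le])
    rw [step, lintegral_const_mul' _ _ ENNReal.ofReal_ne_top, exp_tail_lint hB x]
  rw [h1, h2, ← ENNReal.ofReal_mul (exp_pos _).le, ← ENNReal.ofReal_mul (exp_pos _).le,
    ← ENNReal.ofReal_add]
  · congr 1
    have e1 : exp (-((l1+l3)*x)) * exp (-(l2*x)) = exp (-((l1+l2+l3)*x)) := by
      rw [← exp_add]; ring_nf
    have e2 : exp (-(l1*x)) * exp (-((l2+l3)*x)) = exp (-((l1+l2+l3)*x)) := by
      rw [← exp_add]; ring_nf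
    have h3 : exp (-((l1+l3)*x)) * exp (-(l2*x)) = exp (-(l1*x)) * exp (-((l2+l3)*x)) :=
      e1.trans e2.symm
    rw [← e1]
    linear_combination (-(1/(l2+l3))) * h3
  · have he : exp (-(l2*x)) ≤ 1 := exp_le_one_iff.mpr (by nlinarith)
    have : (0:ℝ) ≤ (1 - exp (-(l2*x)))/l2 := div_nonneg (by linarith) hl2.le
    positivity
  · positivity

lemma outer_int {l1 l2 l3 : ℝ} (hl1 : 0 < l1) (hl2 : 0 < l2) (hl3 : 0 ≤ l3) :
    ∫⁻ x in Set.Ioi 0, ENNReal.ofReal ((1/l2) * exp (-((l1+l3) * x))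
        + (1/(l2+l3) - 1/l2) * exp (-((l1+l2+l3) * x))) =
      ENNReal.ofReal ((1 / (l1 + l2 + l3)) * (1 / (l1 + l3) + 1 / (l2 + l3))) := by
  have hA : 0 < l1 + l3 := by linarith
  have hB : 0 < l2 + l3 := by linarith
  have hS : 0 < l1 + l2 + l3 := by linarith
  have iA : IntegrableOn (fun x => exp (-((l1+l3) * x))) (Set.Ioi 0) := by
    have h := exp_neg_integrableOn_Ioi 0 hA
    simp only [neg_mul] at h; exact h
  have iS : IntegrableOn (fun x => exp (-((l1+l2+l3) * x))) (Set.Ioi 0) := by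
    have h := exp_neg_integrableOn_Ioi 0 hS
    simp only [neg_mul] at h; exact h
  rw [← ofReal_integral_eq_lintegral_ofReal]
  · rw [integral_add ((iA.const_mul _)) ((iS.const_mul _)), integral_const_mul,
      integral_const_mul, exp_tail hA 0, exp_tail hS 0]
    congr 1
    simp only [mul_zero, neg_zero, exp_zero]
    field_simp
    ring
  · exact (iA.const_mul _).add (iS.const_mul _)
  · rw [Filter.EventuallyLE, ae_restrict_iff' measurableSet_Ioi]
    refine Filter.Eventually.of_forall fun x hx => ?_
    have hxx : (0:ℝ) < x := hx
    have hle : exp (-((l1+l2+l3)*x)) ≤ exp (-((l1+l3)*x)) := by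
      apply exp_le_exp.mpr; nlinarith
    have h2 : (0:ℝ) ≤ 1/(l2+l3) := by positivity
    have key : (1/l2) * exp (-((l1+l3) * x)) + (1/(l2+l3) - 1/l2) * exp (-((l1+l2+l3) * x))
        = (exp (-((l1+l3) * x)) - exp (-((l1+l2+l3) * x)))/l2
          + exp (-((l1+l2+l3) * x))/(l2+l3) := by ring
    rw [Pi.zero_apply, key]
    have : 0 ≤ (exp (-((l1+l3) * x)) - exp (-((l1+l2+l3) * x)))/l2 := by
      apply div_nonneg (by linarith) hl2.le
    positivity

/-- Marshall-Olkin BVE: `E(XY) = (1/(λ₁+λ₂+λ₃)) (1/(λ₁+λ₃) + 1/(λ₂+λ₃))`. -/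
theorem bve_joint_moment {Ω : Type*} [MeasurableSpace Ω] (μ : Measure Ω)
    [IsProbabilityMeasure μ] (X Y : Ω → ℝ) (hX : Measurable X) (hY : Measurable Y)
    (hXnn : ∀ ω, 0 ≤ X ω) (hYnn : ∀ ω, 0 ≤ Y ω)
    (l1 l2 l3 : ℝ) (hl1 : 0 < l1) (hl2 : 0 < l2) (hl3 : 0 ≤ l3)
    (hsurv : ∀ x y : ℝ, 0 ≤ x → 0 ≤ y →
      μ {ω | x < X ω ∧ y < Y ω} =
        ENNReal.ofReal (exp (-l1 * x - l2 * y - l3 * max x y))) :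
    ∫ ω, X ω * Y ω ∂μ = (1 / (l1 + l2 + l3)) * (1 / (l1 + l3) + 1 / (l2 + l3)) := by
  have hA : 0 < l1 + l3 := by linarith
  have hB : 0 < l2 + l3 := by linarith
  have hS : 0 < l1 + l2 + l3 := by linarith
  set ν : Measure (ℝ × ℝ) :=
    (volume.restrict (Set.Ioi (0:ℝ))).prod (volume.restrict (Set.Ioi (0:ℝ))) with hν
  set F : Ω → ℝ × ℝ → ENNReal := fun ω p =>
    Set.indicator {p : ℝ × ℝ | p.1 < X ω ∧ p.2 < Y ω} 1 p with hF
  -- step 1: pointwise layer cake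
  have step1 : ∀ ω, ENNReal.ofReal (X ω * Y ω) = ∫⁻ p, F ω p ∂ν := by
    intro ω
    have hset : {p : ℝ × ℝ | p.1 < X ω ∧ p.2 < Y ω} = Set.Iio (X ω) ×ˢ Set.Iio (Y ω) := by
      ext p; simp [Set.mem_prod]
    rw [hF]
    simp only [hset]
    rw [lintegral_indicator_one (by exact (measurableSet_Iio.prod measurableSet_Iio)), hν,
      Measure.prod_prod, Measure.restrict_apply measurableSet_Iio,
      Measure.restrict_apply measurableSet_Iio, Set.Iio_inter_Ioi, Real.volume_Ioo,
      Set.Iio_inter_Ioi, Real.volume_Ioo, ← ENNReal.ofReal_mul (by linarith [hXnn ω])]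
    simp
  -- step 2: swap
  have hFmeas : AEMeasurable (Function.uncurry F) (μ.prod ν) := by
    have hmeas : MeasurableSet {q : Ω × (ℝ × ℝ) | q.2.1 < X q.1 ∧ q.2.2 < Y q.1} := by
      apply MeasurableSet.inter
      · exact measurableSet_lt (measurable_snd.fst) (hX.comp measurable_fst)
      · exact measurableSet_lt (measurable_snd.snd) (hY.comp measurable_fst)
    have : Function.uncurry F =
        Set.indicator {q : Ω × (ℝ × ℝ) | q.2.1 < X q.1 ∧ q.2.2 < Y q.1} 1 := by
      funext q
      simp [Function.uncurry, hF, Set.indicator_apply]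
    rw [this]
    exact (measurable_one.indicator hmeas).aemeasurable
  have step2 : ∫⁻ ω, ∫⁻ p, F ω p ∂ν ∂μ = ∫⁻ p, (∫⁻ ω, F ω p ∂μ) ∂ν :=
    lintegral_lintegral_swap hFmeas
  -- step 3: inner ω-integral is the survival probability
  have step3 : ∀ p : ℝ × ℝ, ∫⁻ ω, F ω p ∂μ = μ {ω | p.1 < X ω ∧ p.2 < Y ω} := by
    intro p
    have : (fun ω => F ω p) = Set.indicator {ω | p.1 < X ω ∧ p.2 < Y ω} 1 := by
      funext ω
      simp [hF, Set.indicator_apply]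
    rw [this, lintegral_indicator_one]
    exact MeasurableSet.inter (measurableSet_lt measurable_const hX)
      (measurableSet_lt measurable_const hY)
  -- step 4: compute the (x,y) integral
  have step4 : ∫⁻ p, μ {ω | p.1 < X ω ∧ p.2 < Y ω} ∂ν =
      ENNReal.ofReal ((1 / (l1 + l2 + l3)) * (1 / (l1 + l3) + 1 / (l2 + l3))) := by
    have hrestr : ν = (volume.prod volume).restrict (Set.Ioi 0 ×ˢ Set.Ioi 0) := by
      rw [hν, Measure.prod_restrict]
    have hGmeas : Measurable (fun p : ℝ × ℝ =>
        ENNReal.ofReal (exp (-l1 * p.1 - l2 * p.2 - l3 * max p.1 p.2))) := by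
      apply Measurable.ennreal_ofReal
      have hc : Continuous (fun p : ℝ × ℝ => -l1 * p.1 - l2 * p.2 - l3 * max p.1 p.2) :=
        (((continuous_const.mul continuous_fst).sub (continuous_const.mul continuous_snd)).sub
          (continuous_const.mul (continuous_fst.max continuous_snd)))
      exact (Real.continuous_exp.comp hc).measurable
    have hcongr : ∫⁻ p, μ {ω | p.1 < X ω ∧ p.2 < Y ω} ∂ν =
        ∫⁻ p : ℝ × ℝ, ENNReal.ofReal (exp (-l1 * p.1 - l2 * p.2 - l3 * max p.1 p.2)) ∂ν := by
      rw [hrestr]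
      exact setLIntegral_congr_fun (measurableSet_Ioi.prod measurableSet_Ioi)
        (fun p hp => hsurv p.1 p.2 (le_of_lt hp.1) (le_of_lt hp.2))
    rw [hcongr, hν, lintegral_prod _ hGmeas.aemeasurable]
    rw [setLIntegral_congr_fun measurableSet_Ioi
      (fun x hx => inner_int hl1 hl2 hl3 hx)]
    exact outer_int hl1 hl2 hl3
  -- conclude
  rw [integral_eq_lintegral_of_nonneg_ae
      (Filter.Eventually.of_forall fun ω => mul_nonneg (hXnn ω) (hYnn ω))
      ((hX.mul hY).aestronglyMeasurable)]
  have : ∫⁻ ω, ENNReal.ofReal (X ω * Y ω) ∂μ =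
      ENNReal.ofReal ((1 / (l1 + l2 + l3)) * (1 / (l1 + l3) + 1 / (l2 + l3))) := by
    calc ∫⁻ ω, ENNReal.ofReal (X ω * Y ω) ∂μ = ∫⁻ ω, ∫⁻ p, F ω p ∂ν ∂μ := by
          exact lintegral_congr step1
      _ = ∫⁻ p, (∫⁻ ω, F ω p ∂μ) ∂ν := step2
      _ = ∫⁻ p, μ {ω | p.1 < X ω ∧ p.2 < Y ω} ∂ν := lintegral_congr step3
      _ = _ := step4
  rw [this, ENNReal.toReal_ofReal (by positivity)]
end

section
/- If (X,Y) ~ BVE(λ₁,λ₂,λ₃), then the correlation coefficient of X and Y equals λ₃/(λ₁+λ₂+λ₃); in particular it is nonnegative and strictly less than 1. -/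
open MeasureTheory Real Set
open scoped ENNReal


lemma bve_exp_int {b : ℝ} (hb : 0 < b) (c : ℝ) :
    ∫ x in Ioi c, exp (-(b*x)) = exp (-(b*c))/b := by
  have h := integral_comp_mul_left_Ioi (fun t => exp (-t)) c hb
  simp only [smul_eq_mul, integral_exp_neg_Ioi] at h
  rw [show (fun x => exp (-(b*x))) = (fun x => exp (-(b*x))) from rfl]
  rw [h]; ring

lemma bve_exp_intOn {b : ℝ} (hb : 0 < b) (c : ℝ) :
    IntegrableOn (fun x : ℝ => exp (-(b*x))) (Ioi c) := by
  simpa [neg_mul] using exp_neg_integrableOn_Ioi c hb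

lemma bve_x_exp_int {b : ℝ} (hb : 0 < b) :
    ∫ x in Ioi (0:ℝ), x * exp (-(b*x)) = 1/b^2 := by
  have h := integral_rpow_mul_exp_neg_mul_rpow (p := 1) (q := 1) (b := b)
    one_pos (by norm_num) hb
  simp only [rpow_one, neg_mul] at h
  have h2 : Real.Gamma ((1+1)/1) = 1 := by
    rw [show ((1+1)/1:ℝ) = (1:ℕ) + 1 by norm_num, Real.Gamma_nat_eq_factorial]
    simp
  rw [h, h2, show (-(1+1)/1 : ℝ) = (-2 : ℤ) by norm_num, rpow_intCast]
  simp [zpow_neg]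

lemma bve_x_exp_intOn {b : ℝ} (hb : 0 < b) :
    IntegrableOn (fun x : ℝ => x * exp (-(b*x))) (Ioi 0) := by
  have h := integrableOn_rpow_mul_exp_neg_mul_rpow (p := 1) (s := 1) (b := b)
    (by norm_num) one_pos hb
  simpa [rpow_one, neg_mul] using h

lemma bve_exp_Ioc {b : ℝ} (hb : 0 < b) {x : ℝ} (hx : 0 < x) :
    ∫ y in Ioc (0:ℝ) x, exp (-(b*y)) = 1/b - exp (-(b*x))/b := by
  have hu : Ioc (0:ℝ) x ∪ Ioi x = Ioi 0 := Ioc_union_Ioi_eq_Ioi hx.le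
  have hd : Disjoint (Ioc (0:ℝ) x) (Ioi x) := Ioc_disjoint_Ioi le_rfl
  have h1 : IntegrableOn (fun y : ℝ => exp (-(b*y))) (Ioc 0 x) :=
    (Real.continuous_exp.comp (by continuity)).integrableOn_Ioc
  have h2 := bve_exp_intOn hb x
  have := setIntegral_union hd measurableSet_Ioi h1 h2
  rw [hu, bve_exp_int hb 0, bve_exp_int hb x] at this
  simp only [mul_zero, neg_zero, exp_zero] at this
  linarith

lemma bve_J {l1 l2 l3 : ℝ} (hl1 : 0 < l1) (hl2 : 0 < l2) (hl3 : 0 ≤ l3)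
    {x : ℝ} (hx : 0 < x) :
    ∫ y in Ioi (0:ℝ), exp (-l1*x - l2*y - l3*max x y)
      = (1/l2) * exp (-((l1+l3)*x)) + (1/(l2+l3) - 1/l2) * exp (-((l1+l2+l3)*x)) := by
  have hb : 0 < l2 + l3 := by linarith
  have hu : Ioc (0:ℝ) x ∪ Ioi x = Ioi 0 := Ioc_union_Ioi_eq_Ioi hx.le
  have hd : Disjoint (Ioc (0:ℝ) x) (Ioi x) := Ioc_disjoint_Ioi le_rfl
  have hcont : Continuous (fun y : ℝ => exp (-l1*x - l2*y - l3*max x y)) :=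
    Real.continuous_exp.comp
      (((continuous_const.sub (continuous_const.mul continuous_id)).sub
        (continuous_const.mul (continuous_const.max continuous_id))))
  have h1 : IntegrableOn (fun y : ℝ => exp (-l1*x - l2*y - l3*max x y)) (Ioc 0 x) :=
    hcont.integrableOn_Ioc
  have h2 : IntegrableOn (fun y : ℝ => exp (-l1*x - l2*y - l3*max x y)) (Ioi x) := by
    have base : IntegrableOn (fun y : ℝ => exp (-(l1*x)) * exp (-((l2+l3)*y))) (Ioi x) :=
      (bve_exp_intOn hb x).const_mul _
    refine base.congr_fun (fun y hy => ?_) measurableSet_Ioi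
    dsimp only
    rw [max_eq_right (le_of_lt hy), ← exp_add]
    ring_nf
  have key := setIntegral_union hd measurableSet_Ioi h1 h2
  rw [hu] at key
  rw [key]
  have e1 : ∫ y in Ioc (0:ℝ) x, exp (-l1*x - l2*y - l3*max x y)
      = exp (-((l1+l3)*x)) * (1/l2 - exp (-(l2*x))/l2) := by
    rw [← bve_exp_Ioc hl2 hx, ← integral_const_mul]
    refine setIntegral_congr_fun measurableSet_Ioc (fun y hy => ?_)
    rw [max_eq_left hy.2, ← exp_add]
    ring_nf
  have e2 : ∫ y in Ioi x, exp (-l1*x - l2*y - l3*max x y)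
      = exp (-(l1*x)) * (exp (-((l2+l3)*x))/(l2+l3)) := by
    rw [← bve_exp_int hb x, ← integral_const_mul]
    refine setIntegral_congr_fun measurableSet_Ioi (fun y hy => ?_)
    rw [max_eq_right (le_of_lt hy), ← exp_add]
    ring_nf
  rw [e1, e2]
  have m1 : exp (-((l1+l3)*x)) * exp (-(l2*x)) = exp (-((l1+l2+l3)*x)) := by
    rw [← exp_add]; ring_nf
  have m2 : exp (-(l1*x)) * exp (-((l2+l3)*x)) = exp (-((l1+l2+l3)*x)) := by
    rw [← exp_add]; ring_nf
  linear_combination (1/(l2+l3)) * m2 - (1/l2) * m1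

lemma bve_surv_intOn {l1 l2 l3 : ℝ} (hl1 : 0 < l1) (hl2 : 0 < l2) (hl3 : 0 ≤ l3)
    {x : ℝ} (hx : 0 < x) :
    IntegrableOn (fun y : ℝ => exp (-l1*x - l2*y - l3*max x y)) (Ioi 0) := by
  have hb : 0 < l2 + l3 := by linarith
  have hu : Ioc (0:ℝ) x ∪ Ioi x = Ioi 0 := Ioc_union_Ioi_eq_Ioi hx.le
  have hcont : Continuous (fun y : ℝ => exp (-l1*x - l2*y - l3*max x y)) :=
    Real.continuous_exp.comp
      (((continuous_const.sub (continuous_const.mul continuous_id)).sub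
        (continuous_const.mul (continuous_const.max continuous_id))))
  have h1 : IntegrableOn (fun y : ℝ => exp (-l1*x - l2*y - l3*max x y)) (Ioc 0 x) :=
    hcont.integrableOn_Ioc
  have h2 : IntegrableOn (fun y : ℝ => exp (-l1*x - l2*y - l3*max x y)) (Ioi x) := by
    have base : IntegrableOn (fun y : ℝ => exp (-(l1*x)) * exp (-((l2+l3)*y))) (Ioi x) :=
      (bve_exp_intOn hb x).const_mul _
    refine base.congr_fun (fun y hy => ?_) measurableSet_Ioi
    dsimp only
    rw [max_eq_right (le_of_lt hy), ← exp_add]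
    ring_nf
  rw [← hu]
  exact h1.union h2

lemma bve_M_intOn {l1 l2 l3 : ℝ} (hl1 : 0 < l1) (hl2 : 0 < l2) (hl3 : 0 ≤ l3) :
    IntegrableOn (fun x : ℝ =>
      (1/l2) * exp (-((l1+l3)*x)) + (1/(l2+l3) - 1/l2) * exp (-((l1+l2+l3)*x))) (Ioi 0) :=
  ((bve_exp_intOn (by linarith) 0).const_mul _).add ((bve_exp_intOn (by linarith) 0).const_mul _)

lemma bve_M {l1 l2 l3 : ℝ} (hl1 : 0 < l1) (hl2 : 0 < l2) (hl3 : 0 ≤ l3) :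
    ∫ x in Ioi (0:ℝ),
      ((1/l2) * exp (-((l1+l3)*x)) + (1/(l2+l3) - 1/l2) * exp (-((l1+l2+l3)*x)))
      = 1/(l2*(l1+l3)) + (1/(l2+l3) - 1/l2)/(l1+l2+l3) := by
  rw [integral_add ((bve_exp_intOn (by linarith) 0).const_mul _)
        ((bve_exp_intOn (by linarith) 0).const_mul _),
      integral_const_mul, integral_const_mul,
      bve_exp_int (show (0:ℝ) < l1+l3 by linarith) 0,
      bve_exp_int (show (0:ℝ) < l1+l2+l3 by linarith) 0]
  have h1 : l1+l3 ≠ 0 := by positivity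
  have h2 : l1+l2+l3 ≠ 0 := by positivity
  have h3 : l2+l3 ≠ 0 := by positivity
  simp only [mul_zero, neg_zero, exp_zero]
  field_simp

lemma bve_moments {Ω : Type*} [MeasurableSpace Ω] (μ : Measure Ω) [IsProbabilityMeasure μ]
    {X : Ω → ℝ} (hX : Measurable X) (hXnn : ∀ ω, 0 ≤ X ω) {a : ℝ} (ha : 0 < a)
    (hXs : ∀ x : ℝ, 0 ≤ x → μ {ω | x < X ω} = ENNReal.ofReal (exp (-(a*x)))) :
    Integrable X μ ∧ Integrable (fun ω => X ω ^ 2) μ ∧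
      (∫ ω, X ω ∂μ) = 1/a ∧ (∫ ω, X ω ^ 2 ∂μ) = 2/a^2 := by
  have lX : ∫⁻ ω, ENNReal.ofReal (X ω) ∂μ = ENNReal.ofReal (1/a) := by
    rw [lintegral_eq_lintegral_meas_lt μ (Filter.Eventually.of_forall hXnn) hX.aemeasurable]
    have hcg : ∀ᵐ t ∂(volume.restrict (Ioi (0:ℝ))),
        μ {ω | t < X ω} = ENNReal.ofReal (exp (-(a*t))) := by
      filter_upwards [ae_restrict_mem measurableSet_Ioi] with t ht using hXs t ht.le
    rw [lintegral_congr_ae hcg,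
      ← ofReal_integral_eq_lintegral_ofReal (bve_exp_intOn ha 0)
        (Filter.Eventually.of_forall fun t => (exp_pos _).le),
      bve_exp_int ha 0]
    simp
  have lX2 : ∫⁻ ω, ENNReal.ofReal (X ω ^ 2) ∂μ = ENNReal.ofReal (2/a^2) := by
    have g_int : ∀ t > (0:ℝ), IntervalIntegrable (fun t : ℝ => 2*t) volume 0 t :=
      fun t _ => (continuous_const.mul continuous_id).intervalIntegrable 0 t
    have g_nn : ∀ᵐ t ∂(volume.restrict (Ioi (0:ℝ))), 0 ≤ 2*t := by
      filter_upwards [ae_restrict_mem measurableSet_Ioi] with t ht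
      simp only [mem_Ioi] at ht; linarith
    have key := lintegral_comp_eq_lintegral_meas_lt_mul μ
      (Filter.Eventually.of_forall hXnn) hX.aemeasurable g_int g_nn
    have lhs_eq : ∀ ω, (∫ t in (0:ℝ)..X ω, 2*t) = X ω ^ 2 := fun ω => by
      rw [intervalIntegral.integral_const_mul, integral_id]; ring
    simp_rw [lhs_eq] at key
    rw [key]
    have hcg : ∀ᵐ t ∂(volume.restrict (Ioi (0:ℝ))),
        μ {ω | t < X ω} * ENNReal.ofReal (2*t) = ENNReal.ofReal (exp (-(a*t)) * (2*t)) := by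
      filter_upwards [ae_restrict_mem measurableSet_Ioi] with t ht
      rw [hXs t ht.le, ← ENNReal.ofReal_mul (exp_pos _).le]
    have hint : IntegrableOn (fun t : ℝ => exp (-(a*t)) * (2*t)) (Ioi 0) := by
      have : (fun t : ℝ => exp (-(a*t)) * (2*t)) = (fun t => 2 * (t * exp (-(a*t)))) := by
        funext t; ring
      rw [this]
      exact (bve_x_exp_intOn ha).const_mul 2
    have hnn : ∀ᵐ t ∂(volume.restrict (Ioi (0:ℝ))), 0 ≤ exp (-(a*t)) * (2*t) := by
      filter_upwards [ae_restrict_mem measurableSet_Ioi] with t ht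
      simp only [mem_Ioi] at ht
      positivity
    rw [lintegral_congr_ae hcg, ← ofReal_integral_eq_lintegral_ofReal hint hnn]
    congr 1
    have : ∫ t in Ioi (0:ℝ), exp (-(a*t)) * (2*t) = 2 * ∫ t in Ioi (0:ℝ), t * exp (-(a*t)) := by
      rw [← integral_const_mul]
      congr 1; funext t; ring
    rw [this, bve_x_exp_int ha]
    ring
  have intX : Integrable X μ := by
    refine ⟨hX.aestronglyMeasurable, ?_⟩
    rw [hasFiniteIntegral_iff_ofReal (Filter.Eventually.of_forall hXnn), lX]
    exact ENNReal.ofReal_lt_top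
  have intX2 : Integrable (fun ω => X ω ^ 2) μ := by
    refine ⟨(hX.pow_const 2).aestronglyMeasurable, ?_⟩
    rw [hasFiniteIntegral_iff_ofReal (Filter.Eventually.of_forall fun ω => sq_nonneg _), lX2]
    exact ENNReal.ofReal_lt_top
  refine ⟨intX, intX2, ?_, ?_⟩
  · rw [integral_eq_lintegral_of_nonneg_ae (Filter.Eventually.of_forall hXnn)
      hX.aestronglyMeasurable, lX, ENNReal.toReal_ofReal (by positivity)]
  · rw [integral_eq_lintegral_of_nonneg_ae (Filter.Eventually.of_forall fun ω => sq_nonneg _)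
      (hX.pow_const 2).aestronglyMeasurable, lX2, ENNReal.toReal_ofReal (by positivity)]

lemma bve_lXY {Ω : Type*} [MeasurableSpace Ω] (μ : Measure Ω) [IsProbabilityMeasure μ]
    {X Y : Ω → ℝ} (hX : Measurable X) (hY : Measurable Y)
    (hXnn : ∀ ω, 0 ≤ X ω) (hYnn : ∀ ω, 0 ≤ Y ω)
    {l1 l2 l3 : ℝ} (hl1 : 0 < l1) (hl2 : 0 < l2) (hl3 : 0 ≤ l3)
    (hsurv : ∀ x y : ℝ, 0 < x → 0 < y →
      μ {ω | x < X ω ∧ y < Y ω} = ENNReal.ofReal (exp (-l1*x - l2*y - l3*max x y))) :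
    ∫⁻ ω, ENNReal.ofReal (X ω * Y ω) ∂μ
      = ENNReal.ofReal (1/(l2*(l1+l3)) + (1/(l2+l3) - 1/l2)/(l1+l2+l3)) := by
  set ν : Measure ℝ := volume.restrict (Ioi (0:ℝ)) with hν
  set pr : Measure (ℝ × ℝ) := ν.prod ν with hpr
  set T : Set (Ω × (ℝ × ℝ)) := {z | z.2.1 < X z.1 ∧ z.2.2 < Y z.1} with hTdef
  have hT : MeasurableSet T :=
    (measurableSet_lt (measurable_fst.comp measurable_snd) (hX.comp measurable_fst)).inter
      (measurableSet_lt (measurable_snd.comp measurable_snd) (hY.comp measurable_fst))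
  have step1 : ∀ ω, ENNReal.ofReal (X ω * Y ω)
      = ∫⁻ p, T.indicator (fun _ => (1:ℝ≥0∞)) (ω, p) ∂pr := by
    intro ω
    have he : (fun p : ℝ × ℝ => T.indicator (fun _ => (1:ℝ≥0∞)) (ω, p))
        = (Iio (X ω) ×ˢ Iio (Y ω)).indicator (fun _ => (1:ℝ≥0∞)) := by
      funext p
      simp [Set.indicator_apply, hTdef, Set.mem_prod]
    rw [he, lintegral_indicator ((measurableSet_Iio).prod measurableSet_Iio), setLIntegral_one, hpr,
      Measure.prod_prod, hν, Measure.restrict_apply measurableSet_Iio,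
      Measure.restrict_apply measurableSet_Iio, Set.Iio_inter_Ioi, Set.Iio_inter_Ioi,
      Real.volume_Ioo, Real.volume_Ioo, sub_zero, sub_zero,
      ← ENNReal.ofReal_mul (hXnn ω)]
  calc ∫⁻ ω, ENNReal.ofReal (X ω * Y ω) ∂μ
      = ∫⁻ ω, ∫⁻ p, T.indicator (fun _ => (1:ℝ≥0∞)) (ω, p) ∂pr ∂μ :=
        lintegral_congr step1
    _ = ∫⁻ p, ∫⁻ ω, T.indicator (fun _ => (1:ℝ≥0∞)) (ω, p) ∂μ ∂pr := by
        refine lintegral_lintegral_swap ?_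
        exact (measurable_const.indicator hT).aemeasurable
    _ = ∫⁻ p, μ {ω | p.1 < X ω ∧ p.2 < Y ω} ∂pr := by
        refine lintegral_congr fun p => ?_
        have he : (fun ω => T.indicator (fun _ => (1:ℝ≥0∞)) (ω, p))
            = ({ω | p.1 < X ω ∧ p.2 < Y ω}).indicator (fun _ => (1:ℝ≥0∞)) := by
          funext ω
          simp [Set.indicator_apply, hTdef]
        have hms : MeasurableSet {ω | p.1 < X ω ∧ p.2 < Y ω} :=
          (measurableSet_lt measurable_const hX).inter (measurableSet_lt measurable_const hY)
        rw [he, lintegral_indicator hms, setLIntegral_one]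
    _ = ∫⁻ p, ENNReal.ofReal (exp (-l1*p.1 - l2*p.2 - l3*max p.1 p.2)) ∂pr := by
        refine lintegral_congr_ae ?_
        have hnull : pr ((Ioi (0:ℝ) ×ˢ Ioi (0:ℝ))ᶜ) = 0 := by
          rw [Set.compl_prod_eq_union]
          refine measure_union_null ?_ ?_
          · rw [hpr, Measure.prod_prod, hν]
            simp [Measure.restrict_apply (MeasurableSet.compl measurableSet_Ioi), Set.Iic_inter_Ioi, Set.Ioc_self]
          · rw [hpr, Measure.prod_prod, hν]
            simp [Measure.restrict_apply (MeasurableSet.compl measurableSet_Ioi), Set.Iic_inter_Ioi, Set.Ioc_self]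
        have hae : ∀ᵐ p ∂pr, p ∈ (Ioi (0:ℝ)) ×ˢ (Ioi (0:ℝ)) := mem_ae_iff.mpr hnull
        filter_upwards [hae] with p hp
        exact hsurv p.1 p.2 hp.1 hp.2
    _ = ∫⁻ x in Ioi (0:ℝ), ∫⁻ y in Ioi (0:ℝ),
          ENNReal.ofReal (exp (-l1*x - l2*y - l3*max x y)) ∂volume ∂volume := by
        rw [hpr]
        refine lintegral_prod _ ?_
        refine (ENNReal.measurable_ofReal.comp ?_).aemeasurable
        exact (Real.continuous_exp.comp
          (((continuous_const.mul continuous_fst).sub (continuous_const.mul continuous_snd)).sub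
            (continuous_const.mul (continuous_fst.max continuous_snd)))).measurable
    _ = ∫⁻ x in Ioi (0:ℝ), ENNReal.ofReal
          ((1/l2) * exp (-((l1+l3)*x)) + (1/(l2+l3) - 1/l2) * exp (-((l1+l2+l3)*x))) ∂volume := by
        refine lintegral_congr_ae ?_
        filter_upwards [ae_restrict_mem measurableSet_Ioi] with x hx
        rw [← ofReal_integral_eq_lintegral_ofReal (bve_surv_intOn hl1 hl2 hl3 hx)
          (Filter.Eventually.of_forall fun y => (exp_pos _).le), bve_J hl1 hl2 hl3 hx]
    _ = ENNReal.ofReal (1/(l2*(l1+l3)) + (1/(l2+l3) - 1/l2)/(l1+l2+l3)) := by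
        rw [← ofReal_integral_eq_lintegral_ofReal (bve_M_intOn hl1 hl2 hl3) ?_,
          bve_M hl1 hl2 hl3]
        filter_upwards [ae_restrict_mem measurableSet_Ioi] with x hx
        rw [← bve_J hl1 hl2 hl3 hx]
        exact setIntegral_nonneg measurableSet_Ioi fun y _ => (exp_pos _).le

/-- Marshall-Olkin BVE: the correlation coefficient of `X` and `Y` equals
`λ₃/(λ₁+λ₂+λ₃)`, which is nonnegative and strictly less than `1`. -/
theorem bve_correlation {Ω : Type*} [MeasurableSpace Ω] (μ : Measure Ω)
    [IsProbabilityMeasure μ] (X Y : Ω → ℝ) (hX : Measurable X) (hY : Measurable Y)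
    (hXnn : ∀ ω, 0 ≤ X ω) (hYnn : ∀ ω, 0 ≤ Y ω)
    (l1 l2 l3 : ℝ) (hl1 : 0 < l1) (hl2 : 0 < l2) (hl3 : 0 ≤ l3)
    (hsurv : ∀ x y : ℝ, 0 ≤ x → 0 ≤ y →
      μ {ω | x < X ω ∧ y < Y ω} =
        ENNReal.ofReal (exp (-l1 * x - l2 * y - l3 * max x y))) :
    (∫ ω, (X ω - ∫ ω', X ω' ∂μ) * (Y ω - ∫ ω', Y ω' ∂μ) ∂μ) /
        (Real.sqrt (∫ ω, (X ω - ∫ ω', X ω' ∂μ) ^ 2 ∂μ) *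
          Real.sqrt (∫ ω, (Y ω - ∫ ω', Y ω' ∂μ) ^ 2 ∂μ)) =
      l3 / (l1 + l2 + l3) ∧
    0 ≤ l3 / (l1 + l2 + l3) ∧ l3 / (l1 + l2 + l3) < 1 := by
  have ha : (0:ℝ) < l1 + l3 := by linarith
  have hbb : (0:ℝ) < l2 + l3 := by linarith
  have hss : (0:ℝ) < l1 + l2 + l3 := by linarith
  have hmS : MeasurableSet {ω | 0 < X ω ∧ 0 < Y ω} :=
    (measurableSet_lt measurable_const hX).inter (measurableSet_lt measurable_const hY)
  have hS1 : μ {ω | 0 < X ω ∧ 0 < Y ω} = 1 := by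
    have h := hsurv 0 0 le_rfl le_rfl
    simpa using h
  have hcomp : μ ({ω | 0 < X ω ∧ 0 < Y ω}ᶜ) = 0 := by
    rw [measure_compl hmS (measure_ne_top μ _), hS1, measure_univ]
    simp
  have hYnull : μ {ω | ¬ 0 < Y ω} = 0 := by
    refine measure_mono_null ?_ hcomp
    intro ω h hc
    exact h hc.2
  have hXnull : μ {ω | ¬ 0 < X ω} = 0 := by
    refine measure_mono_null ?_ hcomp
    intro ω h hc
    exact h hc.1
  have hXs : ∀ x : ℝ, 0 ≤ x → μ {ω | x < X ω} = ENNReal.ofReal (exp (-((l1+l3)*x))) := by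
    intro x hx
    have h1 : μ {ω | x < X ω ∧ 0 < Y ω} = ENNReal.ofReal (exp (-((l1+l3)*x))) := by
      have h := hsurv x 0 hx le_rfl
      rw [max_eq_left hx] at h
      rwa [show -l1 * x - l2 * 0 - l3 * x = -((l1+l3)*x) by ring] at h
    refine le_antisymm ?_ ?_
    · have hsub : {ω | x < X ω} ⊆ {ω | x < X ω ∧ 0 < Y ω} ∪ {ω | ¬ 0 < Y ω} := by
        intro ω h
        by_cases hy : 0 < Y ω
        · exact Or.inl ⟨h, hy⟩
        · exact Or.inr hy
      calc μ {ω | x < X ω} ≤ _ := measure_mono hsub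
        _ ≤ μ {ω | x < X ω ∧ 0 < Y ω} + μ {ω | ¬ 0 < Y ω} := measure_union_le _ _
        _ = ENNReal.ofReal (exp (-((l1+l3)*x))) := by rw [h1, hYnull, add_zero]
    · rw [← h1]
      exact measure_mono fun ω h => h.1
  have hYs : ∀ y : ℝ, 0 ≤ y → μ {ω | y < Y ω} = ENNReal.ofReal (exp (-((l2+l3)*y))) := by
    intro y hy
    have h1 : μ {ω | 0 < X ω ∧ y < Y ω} = ENNReal.ofReal (exp (-((l2+l3)*y))) := by
      have h := hsurv 0 y le_rfl hy
      rw [max_eq_right hy] at h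
      rwa [show -l1 * 0 - l2 * y - l3 * y = -((l2+l3)*y) by ring] at h
    refine le_antisymm ?_ ?_
    · have hsub : {ω | y < Y ω} ⊆ {ω | 0 < X ω ∧ y < Y ω} ∪ {ω | ¬ 0 < X ω} := by
        intro ω h
        by_cases hx : 0 < X ω
        · exact Or.inl ⟨hx, h⟩
        · exact Or.inr hx
      calc μ {ω | y < Y ω} ≤ _ := measure_mono hsub
        _ ≤ μ {ω | 0 < X ω ∧ y < Y ω} + μ {ω | ¬ 0 < X ω} := measure_union_le _ _
        _ = ENNReal.ofReal (exp (-((l2+l3)*y))) := by rw [h1, hXnull, add_zero]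
    · rw [← h1]
      exact measure_mono fun ω h => h.2
  obtain ⟨intX, intX2, EX, EX2⟩ := bve_moments μ hX hXnn ha hXs
  obtain ⟨intY, intY2, EY, EY2⟩ := bve_moments μ hY hYnn hbb hYs
  have lXY := bve_lXY μ hX hY hXnn hYnn hl1 hl2 hl3 (fun x y hx hy => hsurv x y hx.le hy.le)
  have hMnn : (0:ℝ) ≤ 1/(l2*(l1+l3)) + (1/(l2+l3) - 1/l2)/(l1+l2+l3) := by
    have key : 1/(l2*(l1+l3)) + (1/(l2+l3) - 1/l2)/(l1+l2+l3)
        = l3/((l1+l3)*(l2+l3)*(l1+l2+l3)) + 1/((l1+l3)*(l2+l3)) := by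
      field_simp
      ring
    rw [key]
    positivity
  have intXY : Integrable (fun ω => X ω * Y ω) μ := by
    refine ⟨(hX.mul hY).aestronglyMeasurable, ?_⟩
    rw [hasFiniteIntegral_iff_ofReal
      (Filter.Eventually.of_forall fun ω => mul_nonneg (hXnn ω) (hYnn ω)), lXY]
    exact ENNReal.ofReal_lt_top
  have EXY : ∫ ω, X ω * Y ω ∂μ = 1/(l2*(l1+l3)) + (1/(l2+l3) - 1/l2)/(l1+l2+l3) := by
    rw [integral_eq_lintegral_of_nonneg_ae
      (Filter.Eventually.of_forall fun ω => mul_nonneg (hXnn ω) (hYnn ω))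
      (hX.mul hY).aestronglyMeasurable, lXY, ENNReal.toReal_ofReal hMnn]
  rw [EX, EY]
  have hcov : ∫ ω, (X ω - 1/(l1+l3)) * (Y ω - 1/(l2+l3)) ∂μ
      = l3/((l1+l3)*(l2+l3)*(l1+l2+l3)) := by
    have hfun : (fun ω => (X ω - 1/(l1+l3)) * (Y ω - 1/(l2+l3)))
        = fun ω => X ω * Y ω - ((1/(l2+l3)) * X ω + ((1/(l1+l3)) * Y ω
            - (1/(l1+l3))*(1/(l2+l3)))) := by
      funext ω; ring
    have Ic : Integrable (fun _ : Ω => 1/(l1+l3) * (1/(l2+l3))) μ := integrable_const _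
    have I3 : Integrable (fun ω => 1/(l1+l3) * Y ω - 1/(l1+l3) * (1/(l2+l3))) μ :=
      (intY.const_mul _).sub Ic
    have I1 : Integrable (fun ω => 1/(l2+l3) * X ω
        + (1/(l1+l3) * Y ω - 1/(l1+l3) * (1/(l2+l3)))) μ := (intX.const_mul _).add I3
    rw [hfun, integral_sub intXY I1, integral_add (intX.const_mul _) I3,
      integral_sub (intY.const_mul _) Ic,
      integral_const_mul, integral_const_mul, integral_const, EXY, EX, EY]
    simp only [probReal_univ, ENNReal.toReal_one, smul_eq_mul, one_mul]
    field_simp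
    ring
  have hvarX : ∫ ω, (X ω - 1/(l1+l3)) ^ 2 ∂μ = (1/(l1+l3))^2 := by
    have hfun : (fun ω => (X ω - 1/(l1+l3))^2)
        = fun ω => X ω ^ 2 - ((2*(1/(l1+l3))) * X ω - (1/(l1+l3))^2) := by
      funext ω; ring
    have Ic : Integrable (fun _ : Ω => (1/(l1+l3))^2) μ := integrable_const _
    have I3 : Integrable (fun ω => (2*(1/(l1+l3))) * X ω - (1/(l1+l3))^2) μ :=
      (intX.const_mul _).sub Ic
    rw [hfun, integral_sub intX2 I3,
      integral_sub (intX.const_mul _) Ic, integral_const_mul, integral_const,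
      EX2, EX]
    simp only [probReal_univ, ENNReal.toReal_one, smul_eq_mul, one_mul]
    field_simp
    ring
  have hvarY : ∫ ω, (Y ω - 1/(l2+l3)) ^ 2 ∂μ = (1/(l2+l3))^2 := by
    have hfun : (fun ω => (Y ω - 1/(l2+l3))^2)
        = fun ω => Y ω ^ 2 - ((2*(1/(l2+l3))) * Y ω - (1/(l2+l3))^2) := by
      funext ω; ring
    have Ic : Integrable (fun _ : Ω => (1/(l2+l3))^2) μ := integrable_const _
    have I3 : Integrable (fun ω => (2*(1/(l2+l3))) * Y ω - (1/(l2+l3))^2) μ :=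
      (intY.const_mul _).sub Ic
    rw [hfun, integral_sub intY2 I3,
      integral_sub (intY.const_mul _) Ic, integral_const_mul, integral_const,
      EY2, EY]
    simp only [probReal_univ, ENNReal.toReal_one, smul_eq_mul, one_mul]
    field_simp
    ring
  rw [hcov, hvarX, hvarY, Real.sqrt_sq (by positivity), Real.sqrt_sq (by positivity)]
  refine ⟨?_, div_nonneg hl3 hss.le, (div_lt_one hss).mpr (by linarith)⟩
  field_simp
end

section
/- If (X,Y) ~ BVE(λ₁,λ₂,λ₃) with λ₃ > 0, then P(X = Y) = λ₃/(λ₁+λ₂+λ₃) > 0; in particular the distribution of (X,Y) is not absolutely continuous with respect to two-dimensional Lebesgue measure. -/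
open MeasureTheory Real Filter

lemma bve_div_div (N D h : ℝ) (hh : h ≠ 0) : (N / h) / (D / h) = N / D := by
  rcases eq_or_ne D 0 with rfl | hD
  · simp
  · field_simp

lemma bve_aux_slope (a : ℝ) :
    Tendsto (fun h : ℝ => (1 - Real.exp (-a * h)) / h) (nhdsWithin 0 {(0:ℝ)}ᶜ) (nhds a) := by
  have h1 : HasDerivAt (fun h : ℝ => -a * h) (-a) 0 := by
    simpa using (hasDerivAt_id (0:ℝ)).const_mul (-a)
  have h2 := h1.exp
  have h3 := h2.const_sub 1
  have h4 : HasDerivAt (fun h : ℝ => 1 - Real.exp (-a * h)) a 0 := by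
    exact h3.congr_deriv (by simp)
  have h5 := hasDerivAt_iff_tendsto_slope.mp h4
  refine Filter.Tendsto.congr' ?_ h5
  filter_upwards [self_mem_nhdsWithin] with h hh
  rw [slope_def_field]
  simp

/-- Marshall-Olkin BVE with `λ₃ > 0`: `P(X = Y) = λ₃/(λ₁+λ₂+λ₃) > 0`; in particular
the joint law is not absolutely continuous w.r.t. two-dimensional Lebesgue measure. -/
theorem bve_singular_part {Ω : Type*} [MeasurableSpace Ω] (μ : Measure Ω)
    [IsProbabilityMeasure μ] (X Y : Ω → ℝ) (hX : Measurable X) (hY : Measurable Y)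
    (hXnn : ∀ ω, 0 ≤ X ω) (hYnn : ∀ ω, 0 ≤ Y ω)
    (l1 l2 l3 : ℝ) (hl1 : 0 < l1) (hl2 : 0 < l2) (hl3 : 0 < l3)
    (hsurv : ∀ x y : ℝ, 0 ≤ x → 0 ≤ y →
      μ {ω | x < X ω ∧ y < Y ω} =
        ENNReal.ofReal (exp (-l1 * x - l2 * y - l3 * max x y))) :
    μ {ω | X ω = Y ω} = ENNReal.ofReal (l3 / (l1 + l2 + l3)) ∧
    0 < l3 / (l1 + l2 + l3) ∧
    ¬ (μ.map (fun ω => (X ω, Y ω)) ≪ (volume : Measure (ℝ × ℝ))) := by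
  have hs : (0:ℝ) < l1 + l2 + l3 := by linarith
  set s : ℝ := l1 + l2 + l3 with hsdef
  have meas : ∀ a b : ℝ, MeasurableSet {ω | a < X ω ∧ b < Y ω} :=
    fun a b => (measurableSet_lt measurable_const hX).inter (measurableSet_lt measurable_const hY)
  have measR : ∀ a b : ℝ, MeasurableSet {ω | a < X ω ∧ X ω ≤ b ∧ a < Y ω ∧ Y ω ≤ b} :=
    fun a b => (measurableSet_lt measurable_const hX).inter
      ((measurableSet_le hX measurable_const).inter
        ((measurableSet_lt measurable_const hY).inter (measurableSet_le hY measurable_const)))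
  have hdiagS : ∀ t : ℝ, 0 ≤ t → μ {ω | t < X ω ∧ t < Y ω} = ENNReal.ofReal (exp (-s * t)) := by
    intro t ht
    rw [hsurv t t ht ht]
    congr 1
    rw [max_self, hsdef]
    ring
  -- rectangle probability
  have hrect : ∀ a h : ℝ, 0 ≤ a → 0 < h →
      μ {ω | a < X ω ∧ X ω ≤ a + h ∧ a < Y ω ∧ Y ω ≤ a + h} =
        ENNReal.ofReal (exp (-s * a) *
          (1 - exp (-(l1 + l3) * h) - exp (-(l2 + l3) * h) + exp (-s * h))) := by
    intro a h ha hh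
    have hb : (0:ℝ) ≤ a + h := by linarith
    have hab : a ≤ a + h := by linarith
    set Sb : Set Ω := {ω | a < X ω ∧ a < Y ω} with hSb
    set A : Set Ω := {ω | a + h < X ω ∧ a < Y ω} with hA
    set B : Set Ω := {ω | a < X ω ∧ a + h < Y ω} with hB
    set R : Set Ω := {ω | a < X ω ∧ X ω ≤ a + h ∧ a < Y ω ∧ Y ω ≤ a + h} with hR
    have mA : MeasurableSet A := meas _ _
    have mB : MeasurableSet B := meas _ _
    have mAB : MeasurableSet (A ∪ B) := mA.union mB
    have vS : μ Sb = ENNReal.ofReal (exp (-s * a)) := hdiagS a ha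
    have vA : μ A = ENNReal.ofReal (exp (-s * a) * exp (-(l1 + l3) * h)) := by
      rw [hA, hsurv (a + h) a hb ha, ← Real.exp_add]
      congr 1
      rw [max_eq_left hab, hsdef]
      ring
    have vB : μ B = ENNReal.ofReal (exp (-s * a) * exp (-(l2 + l3) * h)) := by
      rw [hB, hsurv a (a + h) ha hb, ← Real.exp_add]
      congr 1
      rw [max_eq_right hab, hsdef]
      ring
    have vI : μ (A ∩ B) = ENNReal.ofReal (exp (-s * a) * exp (-s * h)) := by
      have hABi : A ∩ B = {ω | a + h < X ω ∧ a + h < Y ω} := by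
        ext ω
        simp only [hA, hB, Set.mem_inter_iff, Set.mem_setOf_eq]
        constructor
        · rintro ⟨⟨h1, -⟩, ⟨-, h4⟩⟩; exact ⟨h1, h4⟩
        · rintro ⟨h1, h2⟩; exact ⟨⟨h1, lt_of_le_of_lt hab h2⟩, ⟨lt_of_le_of_lt hab h1, h2⟩⟩
      rw [hABi, hdiagS (a + h) hb, ← Real.exp_add]
      congr 1
      ring
    have hsub : A ∪ B ⊆ Sb := by
      rintro ω (⟨h1, h2⟩ | ⟨h1, h2⟩)
      exacts [⟨lt_of_le_of_lt hab h1, h2⟩, ⟨h1, lt_of_le_of_lt hab h2⟩]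
    have hdiff : Sb \ (A ∪ B) = R := by
      ext ω
      constructor
      · rintro ⟨⟨h1, h2⟩, hn⟩
        refine ⟨h1, ?_, h2, ?_⟩
        · by_contra hc; exact hn (Or.inl ⟨not_le.mp hc, h2⟩)
        · by_contra hc; exact hn (Or.inr ⟨h1, not_le.mp hc⟩)
      · rintro ⟨h1, h2, h3, h4⟩
        refine ⟨⟨h1, h3⟩, ?_⟩
        rintro (⟨hb1, -⟩ | ⟨-, hb2⟩)
        · exact absurd h2 (not_le.mpr hb1)
        · exact absurd h4 (not_le.mpr hb2)
    have e1 : μ Sb = μ R + μ (A ∪ B) := by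
      have h0 := measure_inter_add_diff (μ := μ) Sb mAB
      rw [Set.inter_eq_self_of_subset_right hsub, hdiff] at h0
      rw [← h0, add_comm]
    have e2 : μ (A ∪ B) + μ (A ∩ B) = μ A + μ B := measure_union_add_inter A mB
    have fR : μ R ≠ ⊤ := measure_ne_top μ _
    have fU : μ (A ∪ B) ≠ ⊤ := measure_ne_top μ _
    have fA : μ A ≠ ⊤ := measure_ne_top μ _
    have fB : μ B ≠ ⊤ := measure_ne_top μ _
    have fI : μ (A ∩ B) ≠ ⊤ := measure_ne_top μ _
    have e1' : (μ Sb).toReal = (μ R).toReal + (μ (A ∪ B)).toReal := by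
      rw [e1, ENNReal.toReal_add fR fU]
    have e2' : (μ (A ∪ B)).toReal + (μ (A ∩ B)).toReal = (μ A).toReal + (μ B).toReal := by
      rw [← ENNReal.toReal_add fU fI, ← ENNReal.toReal_add fA fB, e2]
    have tS : (μ Sb).toReal = exp (-s * a) := by rw [vS, ENNReal.toReal_ofReal (exp_pos _).le]
    have tA : (μ A).toReal = exp (-s * a) * exp (-(l1 + l3) * h) := by
      rw [vA, ENNReal.toReal_ofReal (by positivity)]
    have tB : (μ B).toReal = exp (-s * a) * exp (-(l2 + l3) * h) := by
      rw [vB, ENNReal.toReal_ofReal (by positivity)]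
    have tI : (μ (A ∩ B)).toReal = exp (-s * a) * exp (-s * h) := by
      rw [vI, ENNReal.toReal_ofReal (by positivity)]
    rw [tS] at e1'
    rw [tA, tB] at e2'
    rw [tI] at e2'
    have goalR : (μ R).toReal =
        exp (-s * a) * (1 - exp (-(l1 + l3) * h) - exp (-(l2 + l3) * h) + exp (-s * h)) := by
      nlinarith [e1', e2']
    calc μ R = ENNReal.ofReal ((μ R).toReal) := (ENNReal.ofReal_toReal fR).symm
      _ = _ := by rw [goalR]
  -- geometric sum over the diagonal grid cells
  have hexp_lt_one : ∀ t : ℝ, 0 < t → Real.exp (-t) < 1 := by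
    intro t ht
    have := Real.exp_lt_exp.mpr (show -t < 0 by linarith)
    simpa using this
  have hDm : ∀ h : ℝ, 0 < h →
      μ (⋃ k : ℕ, {ω | (k:ℝ) * h < X ω ∧ X ω ≤ ((k:ℝ) + 1) * h ∧
          (k:ℝ) * h < Y ω ∧ Y ω ≤ ((k:ℝ) + 1) * h}) =
        ENNReal.ofReal ((1 - exp (-(l1 + l3) * h) - exp (-(l2 + l3) * h) + exp (-s * h)) /
          (1 - exp (-s * h))) := by
    intro h hh
    have hr1 : exp (-s * h) < 1 := by
      have : -s * h = -(s * h) := by ring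
      rw [this]
      exact hexp_lt_one _ (by positivity)
    have hdisj : Pairwise (Function.onFun Disjoint (fun k : ℕ =>
        {ω | (k:ℝ) * h < X ω ∧ X ω ≤ ((k:ℝ) + 1) * h ∧
          (k:ℝ) * h < Y ω ∧ Y ω ≤ ((k:ℝ) + 1) * h})) := by
      have key : ∀ i j : ℕ, i < j → Disjoint
          {ω | (i:ℝ) * h < X ω ∧ X ω ≤ ((i:ℝ) + 1) * h ∧ (i:ℝ) * h < Y ω ∧ Y ω ≤ ((i:ℝ) + 1) * h}
          {ω | (j:ℝ) * h < X ω ∧ X ω ≤ ((j:ℝ) + 1) * h ∧ (j:ℝ) * h < Y ω ∧ Y ω ≤ ((j:ℝ) + 1) * h} := by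
        intro i j hij
        rw [Set.disjoint_left]
        rintro ω ⟨-, hi2, -, -⟩ ⟨hj1, -, -, -⟩
        have hij' : (i:ℝ) + 1 ≤ (j:ℝ) := by exact_mod_cast hij
        have : ((i:ℝ) + 1) * h ≤ (j:ℝ) * h := mul_le_mul_of_nonneg_right hij' hh.le
        linarith
      intro i j hij
      rcases lt_or_gt_of_ne hij with hlt | hgt
      · exact key i j hlt
      · exact (key j i hgt).symm
    rw [measure_iUnion hdisj (fun k => measR _ _)]
    have term : ∀ k : ℕ,
        μ {ω | (k:ℝ) * h < X ω ∧ X ω ≤ ((k:ℝ) + 1) * h ∧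
            (k:ℝ) * h < Y ω ∧ Y ω ≤ ((k:ℝ) + 1) * h} =
          ENNReal.ofReal ((1 - exp (-(l1 + l3) * h) - exp (-(l2 + l3) * h) + exp (-s * h)) *
            exp (-s * h) ^ k) := by
      intro k
      have hk0 : (0:ℝ) ≤ (k:ℝ) * h := by positivity
      have hrw : ((k:ℝ) + 1) * h = (k:ℝ) * h + h := by ring
      rw [hrw, hrect ((k:ℝ) * h) h hk0 hh]
      congr 1
      rw [show -s * ((k:ℝ) * h) = (k:ℝ) * (-s * h) by ring, Real.exp_nat_mul]
      ring
    have hCnn : 0 ≤ 1 - exp (-(l1 + l3) * h) - exp (-(l2 + l3) * h) + exp (-s * h) := by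
      have hu : exp (-(l1 + l3) * h) < 1 := by
        rw [show -(l1 + l3) * h = -((l1 + l3) * h) by ring]
        exact hexp_lt_one _ (by positivity)
      have hv : exp (-(l2 + l3) * h) < 1 := by
        rw [show -(l2 + l3) * h = -((l2 + l3) * h) by ring]
        exact hexp_lt_one _ (by positivity)
      have hw : exp (-(l1 + l3) * h) * exp (-(l2 + l3) * h) ≤ exp (-s * h) := by
        rw [← Real.exp_add]
        apply Real.exp_le_exp.mpr
        rw [hsdef]
        nlinarith [mul_pos hl3 hh]
      nlinarith [mul_pos (sub_pos.mpr hu) (sub_pos.mpr hv)]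
    simp_rw [term]
    rw [← ENNReal.ofReal_tsum_of_nonneg
      (fun k => mul_nonneg hCnn (pow_nonneg (exp_pos _).le k))
      ((summable_geometric_of_lt_one (exp_pos _).le hr1).mul_left _)]
    congr 1
    rw [tsum_mul_left, tsum_geometric_of_lt_one (exp_pos _).le hr1, div_eq_mul_inv]
  -- the limit of the grid probabilities
  have hseq : Tendsto (fun m : ℕ => ((1:ℝ)/2) ^ m) atTop (nhdsWithin 0 {(0:ℝ)}ᶜ) := by
    refine tendsto_nhdsWithin_of_tendsto_nhds_of_eventually_within _
      (tendsto_pow_atTop_nhds_zero_of_lt_one (by norm_num) (by norm_num)) ?_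
    exact Eventually.of_forall (fun m => by
      simp only [Set.mem_compl_iff, Set.mem_singleton_iff]
      exact pow_ne_zero m (by norm_num))
  have hNum : Tendsto (fun h : ℝ =>
      (1 - exp (-(l1 + l3) * h) - exp (-(l2 + l3) * h) + exp (-s * h)) / h)
      (nhdsWithin 0 {(0:ℝ)}ᶜ) (nhds l3) := by
    have h1 := bve_aux_slope (l1 + l3)
    have h2 := bve_aux_slope (l2 + l3)
    have h3 := bve_aux_slope s
    have h4 := (h1.add h2).sub h3
    have hval : l1 + l3 + (l2 + l3) - s = l3 := by rw [hsdef]; ring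
    rw [hval] at h4
    refine h4.congr (fun h => ?_)
    ring
  have hFrac : Tendsto (fun h : ℝ =>
      (1 - exp (-(l1 + l3) * h) - exp (-(l2 + l3) * h) + exp (-s * h)) / (1 - exp (-s * h)))
      (nhdsWithin 0 {(0:ℝ)}ᶜ) (nhds (l3 / s)) := by
    have h4 := hNum.div (bve_aux_slope s) (ne_of_gt hs)
    refine Filter.Tendsto.congr' ?_ h4
    filter_upwards [self_mem_nhdsWithin] with h hh
    have hh' : h ≠ 0 := hh
    simp only [Pi.div_apply]
    exact bve_div_div _ _ _ hh'
  set Dse : ℕ → Set Ω := fun m => ⋃ k : ℕ,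
    {ω | (k:ℝ) * ((1:ℝ)/2) ^ m < X ω ∧ X ω ≤ ((k:ℝ) + 1) * ((1:ℝ)/2) ^ m ∧
      (k:ℝ) * ((1:ℝ)/2) ^ m < Y ω ∧ Y ω ≤ ((k:ℝ) + 1) * ((1:ℝ)/2) ^ m} with hDse
  have hμDlim : Tendsto (fun m : ℕ => μ (Dse m)) atTop (nhds (ENNReal.ofReal (l3 / s))) := by
    have h5 := (ENNReal.continuous_ofReal.tendsto _).comp (hFrac.comp hseq)
    refine h5.congr (fun m => ?_)
    exact (hDm (((1:ℝ)/2) ^ m) (by positivity)).symm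
  -- antitone
  have hanti : Antitone Dse := by
    intro m n hmn ω hω
    obtain ⟨k, h1, h2, h3, h4⟩ := Set.mem_iUnion.mp hω
    set j := n - m with hj
    have hnm : n = m + j := by omega
    have haux : (2:ℝ) ^ j * ((1:ℝ)/2) ^ j = 1 := by
      rw [← mul_pow]
      norm_num
    have hpow : ((1:ℝ)/2) ^ m = 2 ^ j * ((1:ℝ)/2) ^ n := by
      rw [hnm, pow_add, show (2:ℝ) ^ j * (((1:ℝ)/2) ^ m * ((1:ℝ)/2) ^ j)
        = ((1:ℝ)/2) ^ m * ((2:ℝ) ^ j * ((1:ℝ)/2) ^ j) from by ring, haux, mul_one]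
    have h2j : 0 < 2 ^ j := Nat.pow_pos (by norm_num)
    have hq1 : k / 2 ^ j * 2 ^ j ≤ k := Nat.div_mul_le_self k (2 ^ j)
    have hq2 : k + 1 ≤ (k / 2 ^ j + 1) * 2 ^ j :=
      (Nat.div_lt_iff_lt_mul h2j).mp (Nat.lt_succ_self (k / 2 ^ j))
    have c1 : ((k / 2 ^ j : ℕ):ℝ) * ((1:ℝ)/2) ^ m ≤ (k:ℝ) * ((1:ℝ)/2) ^ n := by
      have hcast : ((k / 2 ^ j : ℕ):ℝ) * (2:ℝ) ^ j ≤ (k:ℝ) := by exact_mod_cast hq1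
      calc ((k / 2 ^ j : ℕ):ℝ) * ((1:ℝ)/2) ^ m
          = ((k / 2 ^ j : ℕ):ℝ) * (2:ℝ) ^ j * ((1:ℝ)/2) ^ n := by rw [hpow]; ring
        _ ≤ (k:ℝ) * ((1:ℝ)/2) ^ n := mul_le_mul_of_nonneg_right hcast (by positivity)
    have c2 : ((k:ℝ) + 1) * ((1:ℝ)/2) ^ n ≤ (((k / 2 ^ j : ℕ):ℝ) + 1) * ((1:ℝ)/2) ^ m := by
      have hcast : (k:ℝ) + 1 ≤ (((k / 2 ^ j : ℕ):ℝ) + 1) * (2:ℝ) ^ j := by exact_mod_cast hq2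
      calc ((k:ℝ) + 1) * ((1:ℝ)/2) ^ n
          ≤ (((k / 2 ^ j : ℕ):ℝ) + 1) * (2:ℝ) ^ j * ((1:ℝ)/2) ^ n :=
            mul_le_mul_of_nonneg_right hcast (by positivity)
        _ = (((k / 2 ^ j : ℕ):ℝ) + 1) * ((1:ℝ)/2) ^ m := by rw [hpow]; ring
    exact Set.mem_iUnion.mpr ⟨k / 2 ^ j,
      lt_of_le_of_lt c1 h1, h2.trans c2, lt_of_le_of_lt c1 h3, h4.trans c2⟩
  -- intersection
  have hInter : (⋂ m, Dse m) = {ω | X ω = Y ω ∧ 0 < X ω} := by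
    ext ω
    simp only [hDse, Set.mem_iInter, Set.mem_iUnion, Set.mem_setOf_eq]
    constructor
    · intro hm
      have hpos : 0 < X ω := by
        obtain ⟨k, h1, -, -, -⟩ := hm 0
        have hk : (0:ℝ) ≤ (k:ℝ) * ((1:ℝ)/2) ^ 0 := by positivity
        linarith
      refine ⟨?_, hpos⟩
      by_contra hne
      have habs : 0 < |X ω - Y ω| := abs_pos.mpr (sub_ne_zero.mpr hne)
      obtain ⟨m, hm'⟩ := exists_pow_lt_of_lt_one habs (by norm_num : (1/2:ℝ) < 1)
      obtain ⟨k, h1, h2, h3, h4⟩ := hm m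
      have habs2 : |X ω - Y ω| < ((1:ℝ)/2) ^ m := abs_sub_lt_iff.mpr ⟨by linarith, by linarith⟩
      linarith
    · rintro ⟨hxy, hpos⟩ m
      set h : ℝ := ((1:ℝ)/2) ^ m with hh
      have hhpos : 0 < h := by positivity
      have hceil : 0 < ⌈X ω / h⌉₊ := Nat.ceil_pos.mpr (by positivity)
      refine ⟨⌈X ω / h⌉₊ - 1, ?_, ?_, ?_, ?_⟩
      all_goals {
        have hlt : ((⌈X ω / h⌉₊ - 1 : ℕ):ℝ) < X ω / h := Nat.lt_ceil.mp (by omega)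
        have hle : X ω / h ≤ ((⌈X ω / h⌉₊ - 1 : ℕ):ℝ) + 1 := by
          have ha1 : X ω / h ≤ (⌈X ω / h⌉₊ : ℝ) := Nat.le_ceil _
          have ha2 : ((⌈X ω / h⌉₊ - 1 : ℕ):ℝ) + 1 = (⌈X ω / h⌉₊ : ℝ) := by
            have : (⌈X ω / h⌉₊ - 1) + 1 = ⌈X ω / h⌉₊ := by omega
            exact_mod_cast this
          linarith
        first
          | exact (lt_div_iff₀ hhpos).mp hlt
          | exact (div_le_iff₀ hhpos).mp hle
          | · rw [← hxy]; exact (lt_div_iff₀ hhpos).mp hlt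
          | · rw [← hxy]; exact (div_le_iff₀ hhpos).mp hle
      }
  have hmeasD : ∀ m, NullMeasurableSet (Dse m) μ :=
    fun m => (MeasurableSet.iUnion (fun k => measR _ _)).nullMeasurableSet
  have hlim2 := tendsto_measure_iInter_atTop hmeasD hanti ⟨0, measure_ne_top μ _⟩
  rw [hInter] at hlim2
  have keyXY : μ {ω | X ω = Y ω ∧ 0 < X ω} = ENNReal.ofReal (l3 / s) :=
    tendsto_nhds_unique hlim2 hμDlim
  -- P(min = 0) = 0
  have hone : μ {ω | 0 < X ω ∧ 0 < Y ω} = 1 := by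
    have hle1 : ∀ n : ℕ, ENNReal.ofReal (exp (-s * ((1:ℝ)/2) ^ n)) ≤
        μ {ω | 0 < X ω ∧ 0 < Y ω} := by
      intro n
      rw [← hdiagS (((1:ℝ)/2) ^ n) (by positivity)]
      exact measure_mono (fun ω hω =>
        ⟨lt_trans (by positivity) hω.1, lt_trans (by positivity) hω.2⟩)
    have hlim : Tendsto (fun n : ℕ => ENNReal.ofReal (exp (-s * ((1:ℝ)/2) ^ n))) atTop
        (nhds 1) := by
      have h0 : Tendsto (fun n : ℕ => -s * ((1:ℝ)/2) ^ n) atTop (nhds 0) := by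
        have := tendsto_pow_atTop_nhds_zero_of_lt_one
          (by norm_num : (0:ℝ) ≤ 1/2) (by norm_num : (1/2:ℝ) < 1)
        simpa using this.const_mul (-s)
      have h1 := (Real.continuous_exp.tendsto 0).comp h0
      have h2 := (ENNReal.continuous_ofReal.tendsto _).comp h1
      simpa [Function.comp_def] using h2
    exact le_antisymm prob_le_one (le_of_tendsto' hlim hle1)
  have hzero : μ {ω | ¬ (0 < X ω ∧ 0 < Y ω)} = 0 := by
    have hGm : MeasurableSet {ω | 0 < X ω ∧ 0 < Y ω} := meas 0 0
    have hcompl := measure_compl hGm (measure_ne_top μ _)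
    rw [hone, measure_univ, tsub_self] at hcompl
    rw [← Set.compl_setOf]
    exact hcompl
  -- main equality
  have hmain : μ {ω | X ω = Y ω} = ENNReal.ofReal (l3 / s) := by
    refine le_antisymm ?_ ?_
    · calc μ {ω | X ω = Y ω}
          ≤ μ ({ω | X ω = Y ω ∧ 0 < X ω} ∪ {ω | ¬ (0 < X ω ∧ 0 < Y ω)}) := by
            refine measure_mono (fun ω hω => ?_)
            by_cases hx : 0 < X ω
            · exact Or.inl ⟨hω, hx⟩
            · exact Or.inr (fun hc => hx hc.1)
        _ ≤ μ {ω | X ω = Y ω ∧ 0 < X ω} + μ {ω | ¬ (0 < X ω ∧ 0 < Y ω)} := measure_union_le _ _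
        _ = ENNReal.ofReal (l3 / s) := by rw [hzero, keyXY, add_zero]
    · rw [← keyXY]
      exact measure_mono (fun ω hω => hω.1)
  have hpos : 0 < l3 / s := div_pos hl3 hs
  refine ⟨hmain, hpos, ?_⟩
  intro hac
  have mdiag : MeasurableSet {p : ℝ × ℝ | p.1 = p.2} :=
    measurableSet_eq_fun measurable_fst measurable_snd
  have hvol : (volume : Measure (ℝ × ℝ)) {p : ℝ × ℝ | p.1 = p.2} = 0 := by
    rw [Measure.volume_eq_prod, Measure.prod_apply mdiag]
    have hfib : ∀ x : ℝ, (volume : Measure ℝ) (Prod.mk x ⁻¹' {p : ℝ × ℝ | p.1 = p.2}) = 0 := by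
      intro x
      have : Prod.mk x ⁻¹' {p : ℝ × ℝ | p.1 = p.2} = {x} := by
        ext y
        simp [eq_comm]
      rw [this]
      exact measure_singleton x
    simp [hfib]
  have hmap : μ.map (fun ω => (X ω, Y ω)) {p : ℝ × ℝ | p.1 = p.2} = μ {ω | X ω = Y ω} := by
    rw [Measure.map_apply (hX.prodMk hY) mdiag]
    rfl
  have h0 := hac hvol
  rw [hmap, hmain, ENNReal.ofReal_eq_zero] at h0
  linarith
end

section
/- If (X,Y) ~ BVE(λ₁,λ₂,λ₃), then X and Y are independent if and only if λ₃ = 0. -/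
open MeasureTheory Real

/-- Marshall-Olkin BVE: `X` and `Y` are independent iff `λ₃ = 0`. -/
theorem bve_indep_iff {Ω : Type*} [MeasurableSpace Ω] (μ : Measure Ω)
    [IsProbabilityMeasure μ] (X Y : Ω → ℝ) (hX : Measurable X) (hY : Measurable Y)
    (hXnn : ∀ ω, 0 ≤ X ω) (hYnn : ∀ ω, 0 ≤ Y ω)
    (l1 l2 l3 : ℝ) (hl1 : 0 < l1) (hl2 : 0 < l2) (hl3 : 0 ≤ l3)
    (hsurv : ∀ x y : ℝ, 0 ≤ x → 0 ≤ y →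
      μ {ω | x < X ω ∧ y < Y ω} =
        ENNReal.ofReal (exp (-l1 * x - l2 * y - l3 * max x y))) :
    ProbabilityTheory.IndepFun X Y μ ↔ l3 = 0 := by
  -- measurability of the basic sets
  have hmXY : ∀ x y : ℝ, MeasurableSet {ω | x < X ω ∧ y < Y ω} := fun x y =>
    (hX measurableSet_Ioi).inter (hY measurableSet_Ioi)
  -- a.e. X > 0 and Y > 0
  have h00 : μ {ω | 0 < X ω ∧ 0 < Y ω} = 1 := by
    simpa using hsurv 0 0 le_rfl le_rfl
  have hnullY : μ {ω | 0 < Y ω}ᶜ = 0 := by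
    have hsub : {ω | 0 < Y ω}ᶜ ⊆ {ω | 0 < X ω ∧ 0 < Y ω}ᶜ := fun ω h h' => h h'.2
    have : μ {ω | 0 < X ω ∧ 0 < Y ω}ᶜ = 0 := by
      rw [measure_compl (hmXY 0 0) (measure_ne_top μ _), h00, measure_univ, tsub_self]
    exact le_antisymm (le_trans (measure_mono hsub) this.le) zero_le
  have hnullX : μ {ω | 0 < X ω}ᶜ = 0 := by
    have hsub : {ω | 0 < X ω}ᶜ ⊆ {ω | 0 < X ω ∧ 0 < Y ω}ᶜ := fun ω h h' => h h'.1
    have : μ {ω | 0 < X ω ∧ 0 < Y ω}ᶜ = 0 := by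
      rw [measure_compl (hmXY 0 0) (measure_ne_top μ _), h00, measure_univ, tsub_self]
    exact le_antisymm (le_trans (measure_mono hsub) this.le) zero_le
  -- marginal survival functions
  have hXm : ∀ x : ℝ, 0 ≤ x → μ {ω | x < X ω} = ENNReal.ofReal (exp (-(l1 + l3) * x)) := by
    intro x hx
    have h1 : μ ({ω | x < X ω} ∩ {ω | 0 < Y ω}) = μ {ω | x < X ω} :=
      measure_inter_conull hnullY
    have h2 : ({ω | x < X ω} ∩ {ω | 0 < Y ω}) = {ω | x < X ω ∧ 0 < Y ω} := rfl
    have h3 := hsurv x 0 hx le_rfl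
    rw [← h1, h2, h3, max_eq_left hx]
    ring_nf
  have hYm : ∀ y : ℝ, 0 ≤ y → μ {ω | y < Y ω} = ENNReal.ofReal (exp (-(l2 + l3) * y)) := by
    intro y hy
    have h1 : μ ({ω | y < Y ω} ∩ {ω | 0 < X ω}) = μ {ω | y < Y ω} :=
      measure_inter_conull hnullX
    have h2 : ({ω | y < Y ω} ∩ {ω | 0 < X ω}) = {ω | 0 < X ω ∧ y < Y ω} := by
      ext ω; exact ⟨fun h => ⟨h.2, h.1⟩, fun h => ⟨h.2, h.1⟩⟩
    have h3 := hsurv 0 y le_rfl hy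
    rw [← h1, h2, h3, max_eq_right hy]
    ring_nf
  constructor
  · intro hI
    have key := hI.measure_inter_preimage_eq_mul (Set.Ioi (1:ℝ)) (Set.Ioi (1:ℝ))
      measurableSet_Ioi measurableSet_Ioi
    have hset : X ⁻¹' Set.Ioi 1 ∩ Y ⁻¹' Set.Ioi 1 = {ω | 1 < X ω ∧ 1 < Y ω} := rfl
    have hsX : X ⁻¹' Set.Ioi 1 = {ω | (1:ℝ) < X ω} := rfl
    have hsY : Y ⁻¹' Set.Ioi 1 = {ω | (1:ℝ) < Y ω} := rfl
    rw [hset, hsX, hsY, hsurv 1 1 zero_le_one zero_le_one, hXm 1 zero_le_one,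
      hYm 1 zero_le_one, ← ENNReal.ofReal_mul (exp_pos _).le, ← exp_add,
      ENNReal.ofReal_eq_ofReal_iff (exp_pos _).le (exp_pos _).le, exp_eq_exp] at key
    simp only [max_self, mul_one] at key
    linarith
  · intro hl3'
    subst hl3'
    -- independence via π-systems of sets {x < X} and {y < Y}
    have key : ∀ a b : ℝ, μ (X ⁻¹' Set.Ioi a ∩ Y ⁻¹' Set.Ioi b) =
        μ (X ⁻¹' Set.Ioi a) * μ (Y ⁻¹' Set.Ioi b) := by
      intro a b
      rcases lt_or_ge a 0 with ha | ha
      · have hA : X ⁻¹' Set.Ioi a = Set.univ := by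
          ext ω; simp [Set.mem_preimage, lt_of_lt_of_le ha (hXnn ω)]
        rw [hA, Set.univ_inter, measure_univ, one_mul]
      rcases lt_or_ge b 0 with hb | hb
      · have hB : Y ⁻¹' Set.Ioi b = Set.univ := by
          ext ω; simp [Set.mem_preimage, lt_of_lt_of_le hb (hYnn ω)]
        rw [hB, Set.inter_univ, measure_univ, mul_one]
      have hset : X ⁻¹' Set.Ioi a ∩ Y ⁻¹' Set.Ioi b = {ω | a < X ω ∧ b < Y ω} := rfl
      have hsX : X ⁻¹' Set.Ioi a = {ω | a < X ω} := rfl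
      have hsY : Y ⁻¹' Set.Ioi b = {ω | b < Y ω} := rfl
      rw [hset, hsX, hsY, hsurv a b ha hb, hXm a ha, hYm b hb,
        ← ENNReal.ofReal_mul (exp_pos _).le, ← exp_add]
      ring_nf
    have hInd : ProbabilityTheory.Indep
        (MeasurableSpace.comap X (borel ℝ)) (MeasurableSpace.comap Y (borel ℝ)) μ := by
      refine ProbabilityTheory.IndepSets.indep
        (m1 := MeasurableSpace.comap X (borel ℝ)) (m2 := MeasurableSpace.comap Y (borel ℝ))
        (p1 := Set.preimage X '' Set.range Set.Ioi)
        (p2 := Set.preimage Y '' Set.range Set.Ioi) ?_ ?_ ?_ ?_ ?_ ?_ ?_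
      · rw [← BorelSpace.measurable_eq (α := ℝ)]
        exact hX.comap_le
      · rw [← BorelSpace.measurable_eq (α := ℝ)]
        exact hY.comap_le
      · rintro _ ⟨_, ⟨a, rfl⟩, rfl⟩ _ ⟨_, ⟨b, rfl⟩, rfl⟩ -
        exact ⟨Set.Ioi (a ⊔ b), ⟨_, rfl⟩, by rw [← Set.preimage_inter, Set.Ioi_inter_Ioi]⟩
      · rintro _ ⟨_, ⟨a, rfl⟩, rfl⟩ _ ⟨_, ⟨b, rfl⟩, rfl⟩ -
        exact ⟨Set.Ioi (a ⊔ b), ⟨_, rfl⟩, by rw [← Set.preimage_inter, Set.Ioi_inter_Ioi]⟩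
      · rw [borel_eq_generateFrom_Ioi, MeasurableSpace.comap_generateFrom]
      · rw [borel_eq_generateFrom_Ioi, MeasurableSpace.comap_generateFrom]
      · rintro _ _ ⟨_, ⟨a, rfl⟩, rfl⟩ ⟨_, ⟨b, rfl⟩, rfl⟩
        exact Filter.Eventually.of_forall fun _ => by
          simpa [ProbabilityTheory.Kernel.const_apply] using key a b
    rw [← BorelSpace.measurable_eq (α := ℝ)] at hInd
    exact hInd
end
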